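/- Soundness of the variant K5 of the Kuroda translation into minimal logic: if CL + Γ ⊢ A then ML + K5(Γ) ⊢ K5(A), where the inner translation maps (A → B) to (¬A^{K5} ∨ B^{K5}), atomic P to P, commutes with ∧, ∨, ∃, maps ∀x A to ∀x ¬¬A^{K5}, and K5(A) ≡ ¬¬A^{K5}. -/
import Mathlib


/-- First-order formulas over domain `α`, with HOAS quantifiers.
`bot` is an ordinary atom with no special rules in minimal logic. -/
inductive Formula (α : Type) : Type where
  | atom : ℕ → List α → Formula α
  | bot : Formula α
  | and : Formula α → Formula α → Formula α
  | or : Formula α → Formula α → Formula α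
  | imp : Formula α → Formula α → Formula α
  | all : (α → Formula α) → Formula α
  | ex : (α → Formula α) → Formula α

/-- Negation: `¬A ≡ A → ⊥`. -/
def Formula.neg {α : Type} (A : Formula α) : Formula α := A.imp .bot

/-- Biconditional. -/
def Formula.iff {α : Type} (A B : Formula α) : Formula α := (A.imp B).and (B.imp A)

/-- Minimal first-order logic: natural deduction without ex falso quodlibet. -/
inductive ML {α : Type} : Set (Formula α) → Formula α → Prop where
  | ax {Γ : Set (Formula α)} {A : Formula α} : A ∈ Γ → ML Γ A
  | impI {Γ : Set (Formula α)} {A B : Formula α} : ML (insert A Γ) B → ML Γ (A.imp B)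
  | impE {Γ : Set (Formula α)} {A B : Formula α} : ML Γ (A.imp B) → ML Γ A → ML Γ B
  | andI {Γ : Set (Formula α)} {A B : Formula α} : ML Γ A → ML Γ B → ML Γ (A.and B)
  | andE1 {Γ : Set (Formula α)} {A B : Formula α} : ML Γ (A.and B) → ML Γ A
  | andE2 {Γ : Set (Formula α)} {A B : Formula α} : ML Γ (A.and B) → ML Γ B
  | orI1 {Γ : Set (Formula α)} {A B : Formula α} : ML Γ A → ML Γ (A.or B)
  | orI2 {Γ : Set (Formula α)} {A B : Formula α} : ML Γ B → ML Γ (A.or B)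
  | orE {Γ : Set (Formula α)} {A B C : Formula α} : ML Γ (A.or B) → ML (insert A Γ) C → ML (insert B Γ) C → ML Γ C
  | allI {Γ : Set (Formula α)} {f : α → Formula α} : (∀ a, ML Γ (f a)) → ML Γ (.all f)
  | allE {Γ f} (a : α) : ML Γ (.all f) → ML Γ (f a)
  | exI {Γ f} (a : α) : ML Γ (f a) → ML Γ (.ex f)
  | exE {Γ : Set (Formula α)} {f : α → Formula α} {C : Formula α} : ML Γ (.ex f) → (∀ a, ML (insert (f a) Γ) C) → ML Γ C

/-- Intuitionistic first-order logic: minimal logic plus ex falso quodlibet. -/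
inductive IL {α : Type} : Set (Formula α) → Formula α → Prop where
  | ax {Γ : Set (Formula α)} {A : Formula α} : A ∈ Γ → IL Γ A
  | impI {Γ : Set (Formula α)} {A B : Formula α} : IL (insert A Γ) B → IL Γ (A.imp B)
  | impE {Γ : Set (Formula α)} {A B : Formula α} : IL Γ (A.imp B) → IL Γ A → IL Γ B
  | andI {Γ : Set (Formula α)} {A B : Formula α} : IL Γ A → IL Γ B → IL Γ (A.and B)
  | andE1 {Γ : Set (Formula α)} {A B : Formula α} : IL Γ (A.and B) → IL Γ A
  | andE2 {Γ : Set (Formula α)} {A B : Formula α} : IL Γ (A.and B) → IL Γ B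
  | orI1 {Γ : Set (Formula α)} {A B : Formula α} : IL Γ A → IL Γ (A.or B)
  | orI2 {Γ : Set (Formula α)} {A B : Formula α} : IL Γ B → IL Γ (A.or B)
  | orE {Γ : Set (Formula α)} {A B C : Formula α} : IL Γ (A.or B) → IL (insert A Γ) C → IL (insert B Γ) C → IL Γ C
  | allI {Γ : Set (Formula α)} {f : α → Formula α} : (∀ a, IL Γ (f a)) → IL Γ (.all f)
  | allE {Γ f} (a : α) : IL Γ (.all f) → IL Γ (f a)
  | exI {Γ f} (a : α) : IL Γ (f a) → IL Γ (.ex f)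
  | exE {Γ : Set (Formula α)} {f : α → Formula α} {C : Formula α} : IL Γ (.ex f) → (∀ a, IL (insert (f a) Γ) C) → IL Γ C
  | efq {Γ : Set (Formula α)} {A : Formula α} : IL Γ .bot → IL Γ A

/-- Classical first-order logic: minimal logic plus double negation elimination. -/
inductive CL {α : Type} : Set (Formula α) → Formula α → Prop where
  | ax {Γ : Set (Formula α)} {A : Formula α} : A ∈ Γ → CL Γ A
  | impI {Γ : Set (Formula α)} {A B : Formula α} : CL (insert A Γ) B → CL Γ (A.imp B)
  | impE {Γ : Set (Formula α)} {A B : Formula α} : CL Γ (A.imp B) → CL Γ A → CL Γ B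
  | andI {Γ : Set (Formula α)} {A B : Formula α} : CL Γ A → CL Γ B → CL Γ (A.and B)
  | andE1 {Γ : Set (Formula α)} {A B : Formula α} : CL Γ (A.and B) → CL Γ A
  | andE2 {Γ : Set (Formula α)} {A B : Formula α} : CL Γ (A.and B) → CL Γ B
  | orI1 {Γ : Set (Formula α)} {A B : Formula α} : CL Γ A → CL Γ (A.or B)
  | orI2 {Γ : Set (Formula α)} {A B : Formula α} : CL Γ B → CL Γ (A.or B)
  | orE {Γ : Set (Formula α)} {A B C : Formula α} : CL Γ (A.or B) → CL (insert A Γ) C → CL (insert B Γ) C → CL Γ C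
  | allI {Γ : Set (Formula α)} {f : α → Formula α} : (∀ a, CL Γ (f a)) → CL Γ (.all f)
  | allE {Γ f} (a : α) : CL Γ (.all f) → CL Γ (f a)
  | exI {Γ f} (a : α) : CL Γ (f a) → CL Γ (.ex f)
  | exE {Γ : Set (Formula α)} {f : α → Formula α} {C : Formula α} : CL Γ (.ex f) → (∀ a, CL (insert (f a) Γ) C) → CL Γ C
  | dne {Γ : Set (Formula α)} {A : Formula α} : CL Γ A.neg.neg → CL Γ A

/-- Inner translation of K5: `(A → B)` goes to `¬A^{K5} ∨ B^{K5}`, otherwise as Kuroda. -/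
def kurodaFive {α : Type} : Formula α → Formula α
  | .atom n ts => Formula.atom n ts
  | .bot => Formula.bot
  | .and A B => (kurodaFive A).and (kurodaFive B)
  | .or A B => (kurodaFive A).or (kurodaFive B)
  | .imp A B => (kurodaFive A).neg.or (kurodaFive B)
  | .all f => .all (fun a => (kurodaFive (f a)).neg.neg)
  | .ex f => .ex (fun a => kurodaFive (f a))

theorem ML.weaken {α : Type} {Γ Δ : Set (Formula α)} {A : Formula α}
    (h : ML Γ A) (hs : Γ ⊆ Δ) : ML Δ A := by
  induction h generalizing Δ with
  | ax h => exact ML.ax (hs h)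
  | impI _ ih => exact ML.impI (ih (Set.insert_subset_insert hs))
  | impE _ _ ih1 ih2 => exact ML.impE (ih1 hs) (ih2 hs)
  | andI _ _ ih1 ih2 => exact ML.andI (ih1 hs) (ih2 hs)
  | andE1 _ ih => exact ML.andE1 (ih hs)
  | andE2 _ ih => exact ML.andE2 (ih hs)
  | orI1 _ ih => exact ML.orI1 (ih hs)
  | orI2 _ ih => exact ML.orI2 (ih hs)
  | orE _ _ _ ih ihl ihr =>
      exact ML.orE (ih hs) (ihl (Set.insert_subset_insert hs))
        (ihr (Set.insert_subset_insert hs))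
  | allI _ ih => exact ML.allI fun a => ih a hs
  | allE a _ ih => exact ML.allE a (ih hs)
  | exI a _ ih => exact ML.exI a (ih hs)
  | exE _ _ ih ihb =>
      exact ML.exE (ih hs) fun a => ihb a (Set.insert_subset_insert hs)

theorem ML.hyp {α : Type} {Γ : Set (Formula α)} {A : Formula α} :
    ML (insert A Γ) A := ML.ax (Set.mem_insert _ _)

theorem ML.wk {α : Type} {Γ : Set (Formula α)} {A B : Formula α}
    (h : ML Γ A) : ML (insert B Γ) A := h.weaken (Set.subset_insert _ _)

theorem ML.cut {α : Type} {Γ : Set (Formula α)} {A B : Formula α}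
    (h1 : ML Γ A) (h2 : ML (insert A Γ) B) : ML Γ B := ML.impE (ML.impI h2) h1

theorem ML.dni {α : Type} {Γ : Set (Formula α)} {A : Formula α}
    (h : ML Γ A) : ML Γ A.neg.neg := ML.impI (ML.impE ML.hyp h.wk)

/-- From `¬¬A` and a proof of `⊥` from `A`, get `⊥`. -/
theorem ML.nnE {α : Type} {Γ : Set (Formula α)} {A : Formula α}
    (h1 : ML Γ A.neg.neg) (h2 : ML (insert A Γ) Formula.bot) :
    ML Γ Formula.bot := ML.impE h1 (ML.impI h2)

/-- Soundness of K5: if `CL + Γ ⊢ A` then `ML + K5(Γ) ⊢ K5(A)`. -/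
theorem kurodaFive_soundness {α : Type} (Γ : Set (Formula α)) (A : Formula α)
    (h : CL Γ A) : ML ((fun G => (kurodaFive G).neg.neg) '' Γ) ((kurodaFive A).neg.neg) := by
  induction h with
  | @ax Γ A h => exact ML.ax ⟨A, h, rfl⟩
  | @impI Γ A B _ ih =>
      rw [Set.image_insert_eq] at ih
      simp only [kurodaFive]
      apply ML.impI
      -- hyp u : ((kA.neg).or kB).neg
      have hNA : ML (insert ((kurodaFive A).neg.or (kurodaFive B)).neg
          ((fun G => (kurodaFive G).neg.neg) '' Γ)) (kurodaFive A).neg.neg :=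
        ML.impI (ML.impE ML.hyp.wk (ML.orI1 ML.hyp))
      have hNB := ML.cut hNA
        (ih.weaken (Set.insert_subset_insert (Set.subset_insert _ _)))
      exact ML.impE hNB (ML.impI (ML.impE ML.hyp.wk (ML.orI2 ML.hyp)))
  | @impE Γ A B _ _ ih1 ih2 =>
      simp only [kurodaFive] at ih1
      apply ML.impI
      apply ML.nnE ih1.wk
      apply ML.orE ML.hyp
      · exact ML.impE ih2.wk.wk.wk ML.hyp
      · exact ML.impE ML.hyp.wk.wk (ML.hyp : ML (insert (kurodaFive B) _) _)
  | @andI Γ A B _ _ ih1 ih2 =>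
      simp only [kurodaFive]
      apply ML.impI
      apply ML.nnE ih1.wk
      apply ML.nnE ih2.wk.wk
      exact ML.impE ML.hyp.wk.wk (ML.andI ML.hyp.wk ML.hyp)
  | @andE1 Γ A B _ ih =>
      simp only [kurodaFive] at ih
      apply ML.impI
      apply ML.nnE ih.wk
      exact ML.impE ML.hyp.wk (ML.andE1 ML.hyp)
  | @andE2 Γ A B _ ih =>
      simp only [kurodaFive] at ih
      apply ML.impI
      apply ML.nnE ih.wk
      exact ML.impE ML.hyp.wk (ML.andE2 ML.hyp)
  | @orI1 Γ A B _ ih =>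
      simp only [kurodaFive]
      apply ML.impI
      apply ML.nnE ih.wk
      exact ML.impE ML.hyp.wk (ML.orI1 ML.hyp)
  | @orI2 Γ A B _ ih =>
      simp only [kurodaFive]
      apply ML.impI
      apply ML.nnE ih.wk
      exact ML.impE ML.hyp.wk (ML.orI2 ML.hyp)
  | @orE Γ A B C _ _ _ ih ihl ihr =>
      rw [Set.image_insert_eq] at ihl ihr
      simp only [kurodaFive] at ih
      apply ML.impI
      apply ML.nnE ih.wk
      apply ML.orE ML.hyp
      · have hs : (fun G => (kurodaFive G).neg.neg) '' Γ ⊆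
            insert (kurodaFive A)
              (insert ((kurodaFive A).or (kurodaFive B))
                (insert ((kurodaFive C).neg)
                  ((fun G => (kurodaFive G).neg.neg) '' Γ))) :=
          ((Set.subset_insert _ _).trans (Set.subset_insert _ _)).trans
            (Set.subset_insert _ _)
        have hNC := ML.cut (ML.dni ML.hyp)
          (ihl.weaken (Set.insert_subset_insert hs))
        exact ML.impE hNC ML.hyp.wk.wk
      · have hs : (fun G => (kurodaFive G).neg.neg) '' Γ ⊆
            insert (kurodaFive B)
              (insert ((kurodaFive A).or (kurodaFive B))
                (insert ((kurodaFive C).neg)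
                  ((fun G => (kurodaFive G).neg.neg) '' Γ))) :=
          ((Set.subset_insert _ _).trans (Set.subset_insert _ _)).trans
            (Set.subset_insert _ _)
        have hNC := ML.cut (ML.dni ML.hyp)
          (ihr.weaken (Set.insert_subset_insert hs))
        exact ML.impE hNC ML.hyp.wk.wk
  | @allI Γ f _ ih =>
      simp only [kurodaFive]
      exact ML.dni (ML.allI ih)
  | @allE Γ f a _ ih =>
      simp only [kurodaFive] at ih
      apply ML.impI
      apply ML.nnE ih.wk
      exact ML.impE (ML.allE a ML.hyp) ML.hyp.wk
  | @exI Γ f a _ ih =>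
      simp only [kurodaFive]
      apply ML.impI
      apply ML.nnE ih.wk
      exact ML.impE ML.hyp.wk (ML.exI a ML.hyp)
  | @exE Γ f C _ _ ih ihb =>
      simp only [kurodaFive] at ih
      apply ML.impI
      apply ML.nnE ih.wk
      apply ML.exE ML.hyp
      intro a
      have := ihb a
      rw [Set.image_insert_eq] at this
      have hs : (fun G => (kurodaFive G).neg.neg) '' Γ ⊆
          insert (kurodaFive (f a))
            (insert (Formula.ex fun a => kurodaFive (f a))
              (insert ((kurodaFive C).neg)
                ((fun G => (kurodaFive G).neg.neg) '' Γ))) :=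
        ((Set.subset_insert _ _).trans (Set.subset_insert _ _)).trans
          (Set.subset_insert _ _)
      have hNC := ML.cut (ML.dni ML.hyp)
        (this.weaken (Set.insert_subset_insert hs))
      exact ML.impE hNC ML.hyp.wk.wk
  | @dne Γ A _ ih =>
      simp only [Formula.neg, kurodaFive] at ih
      apply ML.impI
      apply ML.nnE ih.wk
      apply ML.orE ML.hyp
      · exact ML.impE ML.hyp (ML.orI1 ML.hyp.wk.wk)
      · exact ML.hyp
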